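/- Define paracomplex-valued functions on ℝ² by ψ₁(u,v) = (1/2)(1 − τ tanh u), ψ₂(u,v) = 0, ψ₃(u,v) = (1/2)(tanh u − τ). Then: (1) they satisfy the de Sitter Weierstrass system ∂ψ₁/∂z̄ − conj(ψ₁)ψ₃ = 0 and ∂ψ₂/∂z̄ − conj(ψ₂)ψ₃ = 0 on all of ℝ²; (2) ψ₁² + ψ₂² − ψ₃² = 0; (3) ψ₁conj(ψ₁) + ψ₂conj(ψ₂) − ψ₃conj(ψ₃) = (1/2)sech²u ≠ 0 (identifying a real paracomplex number (x,0) with x). -/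

import Mathlib

/-- Paracomplex multiplication on 𝕃 = ℝ × ℝ. -/
def Lmul (z w : ℝ × ℝ) : ℝ × ℝ := (z.1 * w.1 + z.2 * w.2, z.1 * w.2 + z.2 * w.1)

/-- Paracomplex conjugation: a + τb ↦ a − τb. -/
def Lconj (z : ℝ × ℝ) : ℝ × ℝ := (z.1, -z.2)

/-- The paracomplex operator ∂/∂z̄: for ψ = (a, b), ∂ψ/∂z̄ = (1/2)(a_u − b_v, b_u − a_v). -/
noncomputable def dzbarL (ψ : ℝ × ℝ → ℝ × ℝ) (p : ℝ × ℝ) : ℝ × ℝ :=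
  ((1 / 2) * ((fderiv ℝ ψ p (1, 0)).1 - (fderiv ℝ ψ p (0, 1)).2),
   (1 / 2) * ((fderiv ℝ ψ p (1, 0)).2 - (fderiv ℝ ψ p (0, 1)).1))

/-! All three functions depend on `u` alone, so `∂/∂z̄` is half the `u`-derivative, and
`tanh' = sech² = 1 - tanh²` turns every claim into a polynomial identity in `tanh u`. -/

open Real

theorem Real.hasDerivAt_tanh (x : ℝ) : HasDerivAt tanh (1 / cosh x ^ 2) x := by
  have h := (hasDerivAt_sinh x).div (hasDerivAt_cosh x) (cosh_pos x).ne'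
  rw [← sq, ← sq, cosh_sq_sub_sinh_sq] at h
  exact (funext tanh_eq_sinh_div_cosh : tanh = fun y => sinh y / cosh y) ▸ h

theorem Real.one_sub_tanh_sq (x : ℝ) : 1 - tanh x ^ 2 = 1 / cosh x ^ 2 := by
  rw [tanh_eq_sinh_div_cosh, div_pow]
  field_simp [(cosh_pos x).ne']
  linear_combination cosh_sq_sub_sinh_sq x

theorem Lmul_Lconj_self (z : ℝ × ℝ) : Lmul z (Lconj z) = (z.1 ^ 2 - z.2 ^ 2, 0) := by
  simp only [Lmul, Lconj, Prod.mk.injEq]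
  constructor <;> ring

theorem dzbarL_comp_fst {g : ℝ → ℝ × ℝ} {g' : ℝ × ℝ} {p : ℝ × ℝ} (hg : HasDerivAt g g' p.1) :
    dzbarL (g ∘ Prod.fst) p = (1 / 2 : ℝ) • g' := by
  have hfd := (hg.hasFDerivAt.comp p (hasFDerivAt_fst (p := p))).fderiv
  ext <;> simp [dzbarL, hfd]

/-- The Weierstrass data ψ₁ = (1/2)(1 − τ tanh u), ψ₂ = 0, ψ₃ = (1/2)(tanh u − τ)
satisfies the de Sitter system ∂ψ₁/∂z̄ − conj(ψ₁)ψ₃ = 0, ∂ψ₂/∂z̄ − conj(ψ₂)ψ₃ = 0,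
the condition ψ₁² + ψ₂² − ψ₃² = 0, and
ψ₁conj(ψ₁) + ψ₂conj(ψ₂) − ψ₃conj(ψ₃) = (1/2)sech²u ≠ 0. -/
theorem deSitter_vertical_plane_data
    (ψ₁ ψ₂ ψ₃ : ℝ × ℝ → ℝ × ℝ)
    (hψ₁ : ∀ p : ℝ × ℝ, ψ₁ p = (1 / 2, -(Real.tanh p.1) / 2))
    (hψ₂ : ∀ p : ℝ × ℝ, ψ₂ p = 0)
    (hψ₃ : ∀ p : ℝ × ℝ, ψ₃ p = (Real.tanh p.1 / 2, -(1 / 2))) :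
    (∀ p : ℝ × ℝ, dzbarL ψ₁ p - Lmul (Lconj (ψ₁ p)) (ψ₃ p) = 0 ∧
      dzbarL ψ₂ p - Lmul (Lconj (ψ₂ p)) (ψ₃ p) = 0) ∧
    (∀ p : ℝ × ℝ,
      Lmul (ψ₁ p) (ψ₁ p) + Lmul (ψ₂ p) (ψ₂ p) - Lmul (ψ₃ p) (ψ₃ p) = 0) ∧
    (∀ p : ℝ × ℝ,
      Lmul (ψ₁ p) (Lconj (ψ₁ p)) + Lmul (ψ₂ p) (Lconj (ψ₂ p)) -
        Lmul (ψ₃ p) (Lconj (ψ₃ p)) = (1 / 2 * (1 / Real.cosh p.1 ^ 2), 0) ∧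
      1 / 2 * (1 / Real.cosh p.1 ^ 2) ≠ 0) := by
  have dψ₁ (p : ℝ × ℝ) : dzbarL ψ₁ p = (0, -(1 / cosh p.1 ^ 2) / 4) := by
    have hg : HasDerivAt (fun u => ((1 : ℝ) / 2, -tanh u / 2)) (0, -(1 / cosh p.1 ^ 2) / 2) p.1 :=
      (hasDerivAt_const _ _).prodMk ((hasDerivAt_tanh p.1).neg.div_const 2)
    rw [show ψ₁ = (fun u : ℝ => ((1 : ℝ) / 2, -tanh u / 2)) ∘ Prod.fst from funext hψ₁,
      dzbarL_comp_fst hg]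
    simp only [Prod.smul_mk, smul_eq_mul, Prod.mk.injEq]
    constructor <;> ring
  have dψ₂ (p : ℝ × ℝ) : dzbarL ψ₂ p = 0 := by
    rw [show ψ₂ = (fun _ : ℝ => (0 : ℝ × ℝ)) ∘ Prod.fst from funext hψ₂,
      dzbarL_comp_fst (hasDerivAt_const p.1 _), smul_zero]
  refine ⟨fun p => ⟨?_, ?_⟩, fun p => ?_, fun p => ⟨?_, by positivity⟩⟩
  · simp only [dψ₁, hψ₁, hψ₃, Lmul, Lconj, ← one_sub_tanh_sq, Prod.mk_sub_mk, Prod.mk_eq_zero]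
    constructor <;> ring
  · simp [dψ₂, hψ₂, Lmul, Lconj]
  · simp only [hψ₁, hψ₂, hψ₃, Lmul, Prod.fst_zero, Prod.snd_zero, Prod.mk_add_mk,
      Prod.mk_sub_mk, Prod.mk_eq_zero]
    constructor <;> ring
  · simp only [Lmul_Lconj_self, hψ₁, hψ₂, hψ₃, ← one_sub_tanh_sq, Prod.fst_zero, Prod.snd_zero,
      Prod.mk_add_mk, Prod.mk_sub_mk, Prod.mk.injEq]
    constructor <;> ring
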